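/- arXiv:0709.3411 — 3 statements merged into one kernel-verified Lean document; each statement's English description precedes it below -/
import Mathlib

section
/- Let K ⊆ ℝ^Ω be a convex cone and K_b = {k ∈ K : the negative part k⁻ is bounded}. Then there exists a finitely additive probability m on the power set of Ω such that every k ∈ K_b is m-integrable and sup_{k ∈ K_b} m(k) ≤ 0, if and only if K contains no element k with k ≥ 1 pointwise. -/
open Filter Set

/-- A positive finitely additive set function on `2^Ω`. -/
structure FinAddMeasure (Ω : Type*) where
  μ : Set Ω → ℝ
  nonneg : ∀ E, 0 ≤ μ E
  empty : μ ∅ = 0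
  add : ∀ E F : Set Ω, Disjoint E F → μ (E ∪ F) = μ E + μ F

/-- A finitely additive probability on `2^Ω`. -/
structure FinAddProb (Ω : Type*) extends FinAddMeasure Ω where
  total : μ Set.univ = 1

/-- Lower (simple-function) sums for `f` relative to a set function `μ` defined
on the sets of the family `A`: sums `∑ aᵢ μ(Eᵢ)` with `aᵢ ≥ 0`, `Eᵢ ∈ A` and
`∑ aᵢ 1_{Eᵢ} ≤ f` pointwise. -/
def lowerSums {Ω : Type*} (A : Set (Set Ω)) (μ : Set Ω → ℝ) (f : Ω → ℝ) : Set ℝ :=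
  { r | ∃ (n : ℕ) (a : Fin n → ℝ) (E : Fin n → Set Ω),
      (∀ i, 0 ≤ a i) ∧ (∀ i, E i ∈ A) ∧
      (∀ ω, (∑ i, a i * (E i).indicator (fun _ => (1 : ℝ)) ω) ≤ f ω) ∧
      r = ∑ i, a i * μ (E i) }

/-- `f` is integrable with respect to `μ` (restricted to the family `A`):
the lower sums of the positive and of the negative part are bounded above. -/
def FAIntegrableOn {Ω : Type*} (A : Set (Set Ω)) (μ : Set Ω → ℝ) (f : Ω → ℝ) : Prop :=
  BddAbove (lowerSums A μ (fun ω => max (f ω) 0)) ∧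
  BddAbove (lowerSums A μ (fun ω => max (-(f ω)) 0))

/-- The finitely additive integral `μ(f) = μ(f⁺) - μ(f⁻)` obtained from lower sums. -/
noncomputable def faIntOn {Ω : Type*} (A : Set (Set Ω)) (μ : Set Ω → ℝ) (f : Ω → ℝ) : ℝ :=
  sSup (lowerSums A μ (fun ω => max (f ω) 0)) -
    sSup (lowerSums A μ (fun ω => max (-(f ω)) 0))

/-- Integrability with respect to a finitely additive measure on all of `2^Ω`. -/
def FAIntegrable {Ω : Type*} (m : FinAddMeasure Ω) (f : Ω → ℝ) : Prop :=
  FAIntegrableOn Set.univ m.μ f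

/-- The integral with respect to a finitely additive measure on all of `2^Ω`. -/
noncomputable def faInt {Ω : Type*} (m : FinAddMeasure Ω) (f : Ω → ℝ) : ℝ :=
  faIntOn Set.univ m.μ f

/-! A sure win `k ≥ 1` would have `m(k⁺) ≥ m(Ω) = 1` and `m(k⁻) = 0`.

Conversely, without a sure win a constant `c` can dominate `-k` for some `k ∈ K ∪ {0}` only
if `c ≥ 0` (otherwise `k ≥ -c > 0` rescales to a sure win), so M. Riesz's extension theorem extends `c • 1 ↦ c` to a linear functional `G` on
the bounded functions that is nonnegative on every bounded `z` with `z + k ≥ 0`, `k ∈ K ∪ {0}`.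
Then `m(E) = G(1_E)` is a finitely additive probability whose integral agrees with `G` on
bounded nonnegative functions (approximate them from below by step functions), and
`k⁺ ≤ k + k⁻` gives `m(k⁺) ≤ G(k⁻) = m(k⁻)`. -/

section

variable {Ω : Type*}

def PointedCone.insertZero {E : Type*} [AddCommGroup E] [Module ℝ E] (K : Set E)
    (hadd : ∀ x y, x ∈ K → y ∈ K → x + y ∈ K) (hsmul : ∀ c : ℝ, 0 ≤ c → ∀ x ∈ K, c • x ∈ K) :
    PointedCone ℝ E where
  carrier := insert 0 K
  zero_mem' := mem_insert _ _
  add_mem' := by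
    rintro x y (rfl | hx) (rfl | hy)
    exacts [by simp, by simpa using Or.inr hy, by simpa using Or.inr hx,
      Or.inr (hadd x y hx hy)]
  smul_mem' := by
    rintro c x (rfl | hx)
    exacts [by simp, Or.inr (hsmul c c.2 x hx)]

lemma PointedCone.not_forall_le_of_forall_exists_lt_one {P : PointedCone ℝ (Ω → ℝ)}
    (hP : ∀ k ∈ P, ∃ ω, k ω < 1) {c : ℝ} (hc : 0 < c) {k : Ω → ℝ} (hk : k ∈ P) :
    ¬ ∀ ω, c ≤ k ω := by
  intro hck
  obtain ⟨ω, hω⟩ := hP (c⁻¹ • k) (Submodule.smul_mem P ⟨c⁻¹, by positivity⟩ hk)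
  have : 1 ≤ c⁻¹ * k ω := by rw [le_inv_mul_iff₀ hc, mul_one]; exact hck ω
  simp only [Pi.smul_apply, smul_eq_mul] at hω
  linarith

lemma zero_mem_lowerSums {A : Set (Set Ω)} {μ : Set Ω → ℝ} {f : Ω → ℝ} (hf : ∀ ω, 0 ≤ f ω) :
    (0 : ℝ) ∈ lowerSums A μ f :=
  ⟨0, Fin.elim0, Fin.elim0, nofun, nofun, fun ω => by simpa using hf ω, by simp⟩

lemma eq_zero_of_mem_lowerSums_of_nonpos {A : Set (Set Ω)} {μ : Set Ω → ℝ} (hμ : μ ∅ = 0)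
    {f : Ω → ℝ} (hf : ∀ ω, f ω ≤ 0) {r : ℝ} (hr : r ∈ lowerSums A μ f) : r = 0 := by
  obtain ⟨n, a, E, ha, -, hle, rfl⟩ := hr
  refine Finset.sum_eq_zero fun i _ => ?_
  obtain hE | ⟨ω, hω⟩ := (E i).eq_empty_or_nonempty
  · rw [hE, hμ, mul_zero]
  · have hnonneg : ∀ j ∈ Finset.univ, 0 ≤ a j * (E j).indicator (fun _ => (1 : ℝ)) ω :=
      fun j _ => mul_nonneg (ha j) (Set.indicator_nonneg (fun _ _ => zero_le_one) ω)
    have hzero := (Finset.sum_eq_zero_iff_of_nonneg hnonneg).1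
      (le_antisymm ((hle ω).trans (hf ω)) (Finset.sum_nonneg hnonneg)) i (Finset.mem_univ i)
    rw [Set.indicator_of_mem hω, mul_one] at hzero
    rw [hzero, zero_mul]

theorem one_le_faInt_of_one_le (m : FinAddProb Ω) {k : Ω → ℝ} (hk : ∀ ω, 1 ≤ k ω)
    (hint : FAIntegrable m.toFinAddMeasure k) : 1 ≤ faInt m.toFinAddMeasure k := by
  have hplus : (1 : ℝ) ∈ lowerSums univ m.μ (fun ω => max (k ω) 0) :=
    ⟨1, fun _ => 1, fun _ => univ, fun _ => zero_le_one, fun _ => mem_univ _,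
      fun ω => by simpa using le_max_of_le_left (hk ω), by simp [m.total]⟩
  have hminus : sSup (lowerSums univ m.μ (fun ω => max (-(k ω)) 0)) ≤ 0 :=
    csSup_le ⟨0, zero_mem_lowerSums fun _ => le_max_right _ _⟩ fun r hr =>
      (eq_zero_of_mem_lowerSums_of_nonpos m.empty
        (fun ω => max_le (by linarith [hk ω]) le_rfl) hr).le
  have := le_csSup hint.1 hplus
  unfold faInt faIntOn
  linarith

lemma exists_sum_indicator_approx {f : Ω → ℝ} {M ε : ℝ} (hf0 : ∀ ω, 0 ≤ f ω)
    (hfM : ∀ ω, f ω ≤ M) (hε : 0 < ε) :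
    ∃ (n : ℕ) (a : Fin n → ℝ) (E : Fin n → Set Ω), (∀ i, 0 ≤ a i) ∧
      ∀ ω, (∑ i, a i * (E i).indicator (fun _ => (1 : ℝ)) ω) ≤ f ω ∧
        f ω < (∑ i, a i * (E i).indicator (fun _ => (1 : ℝ)) ω) + ε := by
  refine ⟨⌊M / ε⌋₊ + 1, fun j => j * ε, fun j => {ω | ⌊f ω / ε⌋₊ = j},
    fun j => by positivity, fun ω => ?_⟩
  have hsum : (∑ j : Fin (⌊M / ε⌋₊ + 1),
      (j * ε) * {ω | ⌊f ω / ε⌋₊ = j}.indicator (fun _ => (1 : ℝ)) ω) = ⌊f ω / ε⌋₊ * ε := by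
    have hlt : ⌊f ω / ε⌋₊ < ⌊M / ε⌋₊ + 1 :=
      Nat.lt_succ_of_le (Nat.floor_le_floor (div_le_div_of_nonneg_right (hfM ω) hε.le))
    simp only [Set.indicator_apply, mem_ofPred_eq, mul_ite, mul_one, mul_zero]
    rw [Fin.sum_univ_eq_sum_range (fun j => if ⌊f ω / ε⌋₊ = j then (j : ℝ) * ε else 0),
      Finset.sum_ite_eq, if_pos (Finset.mem_range.2 hlt)]
  rw [hsum]
  have hfloor := Nat.floor_le (div_nonneg (hf0 ω) hε.le)
  have hlt := Nat.lt_floor_add_one (f ω / ε)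
  constructor
  · rwa [le_div_iff₀ hε] at hfloor
  · rw [div_lt_iff₀ hε] at hlt
    linarith

def boundedFunctions (Ω : Type*) : Submodule ℝ (Ω → ℝ) where
  carrier := {f | ∃ M, ∀ ω, |f ω| ≤ M}
  add_mem' := by
    rintro f g ⟨M, hM⟩ ⟨N, hN⟩
    exact ⟨M + N, fun ω => (abs_add_le _ _).trans (add_le_add (hM ω) (hN ω))⟩
  zero_mem' := ⟨0, by simp⟩
  smul_mem' := by
    rintro c f ⟨M, hM⟩
    exact ⟨|c| * M, fun ω => by
      simpa [abs_mul] using mul_le_mul_of_nonneg_left (hM ω) (abs_nonneg c)⟩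

lemma mem_boundedFunctions_of_le {f : Ω → ℝ} {L M : ℝ} (hL : ∀ ω, L ≤ f ω) (hM : ∀ ω, f ω ≤ M) :
    f ∈ boundedFunctions Ω :=
  ⟨max |L| |M|, fun ω => abs_le.2
    ⟨by linarith [hL ω, neg_abs_le L, le_max_left |L| |M|],
     by linarith [hM ω, le_abs_self M, le_max_right |L| |M|]⟩⟩

def boundedConst (c : ℝ) : boundedFunctions Ω :=
  ⟨fun _ => c, mem_boundedFunctions_of_le (L := c) (M := c) (fun _ => le_rfl) (fun _ => le_rfl)⟩

noncomputable def boundedIndicator (E : Set Ω) : boundedFunctions Ω :=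
  ⟨E.indicator fun _ => 1, mem_boundedFunctions_of_le (L := 0) (M := 1)
    (Set.indicator_nonneg fun _ _ => zero_le_one) (Set.indicator_le_self' fun _ _ => zero_le_one)⟩

def dominatingCone (P : PointedCone ℝ (Ω → ℝ)) : PointedCone ℝ (boundedFunctions Ω) where
  carrier := {z | ∃ k ∈ P, ∀ ω, 0 ≤ (z : Ω → ℝ) ω + k ω}
  zero_mem' := ⟨0, P.zero_mem, by simp⟩
  add_mem' := by
    rintro x y ⟨k, hk, hx⟩ ⟨l, hl, hy⟩
    refine ⟨k + l, P.add_mem hk hl, fun ω => ?_⟩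
    simp only [Submodule.coe_add, Pi.add_apply]
    linarith [hx ω, hy ω]
  smul_mem' := by
    rintro c x ⟨k, hk, hx⟩
    refine ⟨c • k, Submodule.smul_mem P c hk, fun ω => ?_⟩
    simpa [← Nonneg.coe_smul, ← mul_add] using mul_nonneg c.2 (hx ω)

theorem exists_linearMap_nonneg_on_dominatingCone {P : PointedCone ℝ (Ω → ℝ)}
    (hP : ∀ k ∈ P, ∃ ω, k ω < 1) :
    ∃ G : boundedFunctions Ω →ₗ[ℝ] ℝ, G (boundedConst 1) = 1 ∧ ∀ z ∈ dominatingCone P, 0 ≤ G z := by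
  have hne : boundedConst (1 : ℝ) ≠ (0 : boundedFunctions Ω) := by
    obtain ⟨ω, -⟩ := hP 0 P.zero_mem
    intro h
    simpa [boundedConst] using congrFun (congrArg Subtype.val h) ω
  set f : boundedFunctions Ω →ₗ.[ℝ] ℝ := LinearPMap.mkSpanSingleton (boundedConst 1) (1 : ℝ) hne
  have nonneg : ∀ x : f.domain, (x : boundedFunctions Ω) ∈ dominatingCone P → 0 ≤ f x := by
    rintro ⟨x, hx⟩ ⟨k, hk, hxk⟩
    obtain ⟨c, rfl⟩ := Submodule.mem_span_singleton.1 hx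
    rw [LinearPMap.mkSpanSingleton'_apply, RingHom.id_apply, smul_eq_mul, mul_one]
    by_contra! hc
    refine PointedCone.not_forall_le_of_forall_exists_lt_one hP (neg_pos.2 hc) hk fun ω => ?_
    have := hxk ω
    simp only [boundedConst, Submodule.coe_smul, Pi.smul_apply, smul_eq_mul, mul_one] at this
    linarith
  have dense : ∀ y, ∃ x : f.domain, (x : boundedFunctions Ω) + y ∈ dominatingCone P := by
    intro y
    obtain ⟨M, hM⟩ := y.2
    refine ⟨⟨M • boundedConst 1, Submodule.smul_mem _ M (Submodule.mem_span_singleton_self _)⟩,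
      0, P.zero_mem, fun ω => ?_⟩
    simp only [boundedConst, Submodule.coe_add, Submodule.coe_smul, Pi.add_apply, Pi.smul_apply,
      smul_eq_mul, mul_one, Pi.zero_apply, add_zero]
    linarith [(abs_le.1 (hM ω)).1]
  obtain ⟨G, hGext, hG⟩ := riesz_extension (dominatingCone P) f nonneg dense
  refine ⟨G, ?_, hG⟩
  rw [hGext ⟨_, Submodule.mem_span_singleton_self _⟩, LinearPMap.mkSpanSingleton_apply]

lemma map_le_map_of_le_add {P : PointedCone ℝ (Ω → ℝ)} {G : boundedFunctions Ω →ₗ[ℝ] ℝ}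
    (hG : ∀ z ∈ dominatingCone P, 0 ≤ G z) {x y : boundedFunctions Ω} {k : Ω → ℝ} (hk : k ∈ P)
    (h : ∀ ω, (x : Ω → ℝ) ω ≤ (y : Ω → ℝ) ω + k ω) : G x ≤ G y :=
  sub_nonneg.1 (map_sub G y x ▸ hG (y - x) ⟨k, hk, fun ω => by
    simp only [Submodule.coe_sub, Pi.sub_apply]; linarith [h ω]⟩)

section PositiveFunctional

variable (G : boundedFunctions Ω →ₗ[ℝ] ℝ)

lemma map_sum_smul_boundedIndicator {n : ℕ} (a : Fin n → ℝ) (E : Fin n → Set Ω) :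
    G (∑ i, a i • boundedIndicator (E i)) = ∑ i, a i * G (boundedIndicator (E i)) := by
  simp [map_sum, map_smul]

lemma coe_sum_smul_boundedIndicator_apply {n : ℕ} (a : Fin n → ℝ) (E : Fin n → Set Ω) (ω : Ω) :
    ((∑ i, a i • boundedIndicator (E i) : boundedFunctions Ω) : Ω → ℝ) ω =
      ∑ i, a i * (E i).indicator (fun _ => (1 : ℝ)) ω := by
  simp [boundedIndicator]

lemma exists_le_of_mem_lowerSums {f : Ω → ℝ} {r : ℝ}
    (hr : r ∈ lowerSums univ (fun E => G (boundedIndicator E)) f) :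
    ∃ x : boundedFunctions Ω, (∀ ω, (x : Ω → ℝ) ω ≤ f ω) ∧ r = G x := by
  obtain ⟨n, a, E, -, -, hle, rfl⟩ := hr
  exact ⟨∑ i, a i • boundedIndicator (E i),
    fun ω => (coe_sum_smul_boundedIndicator_apply a E ω).trans_le (hle ω),
    (map_sum_smul_boundedIndicator G a E).symm⟩

variable {G} (hG : ∀ x : boundedFunctions Ω, (∀ ω, 0 ≤ (x : Ω → ℝ) ω) → 0 ≤ G x)
include hG

lemma map_le_map_of_forall_le {x y : boundedFunctions Ω} (h : ∀ ω, (x : Ω → ℝ) ω ≤ (y : Ω → ℝ) ω) :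
    G x ≤ G y :=
  sub_nonneg.1 (map_sub G y x ▸ hG (y - x) fun ω => by simpa using h ω)

theorem isLUB_lowerSums_boundedIndicator (x : boundedFunctions Ω)
    (hx : ∀ ω, 0 ≤ (x : Ω → ℝ) ω) :
    IsLUB (lowerSums univ (fun E => G (boundedIndicator E)) x) (G x) := by
  refine ⟨fun r hr => ?_, fun b hb => le_of_forall_pos_le_add fun δ hδ => ?_⟩
  · obtain ⟨y, hy, rfl⟩ := exists_le_of_mem_lowerSums G hr
    exact map_le_map_of_forall_le hG hy
  obtain ⟨M, hM⟩ := x.2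
  have hG1 : 0 ≤ G (boundedConst 1) := hG _ fun _ => zero_le_one
  set ε := δ / (G (boundedConst 1) + 1)
  have hε : 0 < ε := by positivity
  obtain ⟨n, a, E, ha, happrox⟩ := exists_sum_indicator_approx hx (fun ω => (abs_le.1 (hM ω)).2) hε
  have hs : G (∑ i, a i • boundedIndicator (E i)) ≤ b := by
    rw [map_sum_smul_boundedIndicator]
    exact hb ⟨n, a, E, ha, fun _ => mem_univ _, fun ω => (happrox ω).1, rfl⟩
  have hεG : ε * G (boundedConst 1) ≤ δ := by
    rw [div_mul_eq_mul_div, div_le_iff₀ (by positivity)]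
    nlinarith
  have hx_le : G x ≤ G (∑ i, a i • boundedIndicator (E i)) + ε * G (boundedConst 1) := by
    rw [← smul_eq_mul, ← map_smul, ← map_add]
    refine map_le_map_of_forall_le hG fun ω => ?_
    simp only [Submodule.coe_add, Submodule.coe_smul, Pi.add_apply, Pi.smul_apply, smul_eq_mul,
      coe_sum_smul_boundedIndicator_apply, boundedConst, mul_one]
    exact (happrox ω).2.le
  linarith

end PositiveFunctional

noncomputable def FinAddProb.ofPositiveFunctional (G : boundedFunctions Ω →ₗ[ℝ] ℝ)
    (hG : ∀ x : boundedFunctions Ω, (∀ ω, 0 ≤ (x : Ω → ℝ) ω) → 0 ≤ G x)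
    (hG1 : G (boundedConst 1) = 1) : FinAddProb Ω where
  μ E := G (boundedIndicator E)
  nonneg E := hG _ (Set.indicator_nonneg fun _ _ => zero_le_one)
  empty := by
    rw [← map_zero G]
    congr 1
    ext ω
    simp [boundedIndicator]
  add E F hEF := by
    rw [← map_add G]
    congr 1
    ext ω
    exact congrFun (Set.indicator_union_of_disjoint hEF fun _ => (1 : ℝ)) ω
  total := by
    rw [← hG1]
    congr 1
    ext ω
    simp [boundedIndicator, boundedConst]

theorem exists_finAddProb_of_forall_exists_lt_one {P : PointedCone ℝ (Ω → ℝ)}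
    (hP : ∀ k ∈ P, ∃ ω, k ω < 1) :
    ∃ m : FinAddProb Ω, ∀ k ∈ P, (∃ M : ℝ, ∀ ω, max (-(k ω)) 0 ≤ M) →
      FAIntegrable m.toFinAddMeasure k ∧ faInt m.toFinAddMeasure k ≤ 0 := by
  obtain ⟨G, hG1, hG⟩ := exists_linearMap_nonneg_on_dominatingCone hP
  have hpos : ∀ x : boundedFunctions Ω, (∀ ω, 0 ≤ (x : Ω → ℝ) ω) → 0 ≤ G x := fun x hx =>
    map_zero G ▸ map_le_map_of_le_add hG P.zero_mem fun ω => by simpa using hx ω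
  refine ⟨.ofPositiveFunctional G hpos hG1, fun k hk ⟨M, hM⟩ => ?_⟩
  let negPart : boundedFunctions Ω :=
    ⟨fun ω => max (-(k ω)) 0, mem_boundedFunctions_of_le (fun _ => le_max_right _ _) hM⟩
  have hnegPart : ∀ ω, 0 ≤ (negPart : Ω → ℝ) ω := fun _ => le_max_right _ _
  have hminus := isLUB_lowerSums_boundedIndicator hpos negPart hnegPart
  have hplus : ∀ r ∈ lowerSums univ (fun E => G (boundedIndicator E)) (fun ω => max (k ω) 0),
      r ≤ G negPart := by
    intro r hr
    obtain ⟨x, hx, rfl⟩ := exists_le_of_mem_lowerSums G hr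
    refine map_le_map_of_le_add hG hk fun ω => ?_
    have := max_zero_sub_max_neg_zero_eq_self (k ω)
    linarith [hx ω]
  refine ⟨⟨⟨G negPart, hplus⟩, hminus.bddAbove⟩, ?_⟩
  exact sub_nonpos.2 ((csSup_le ⟨0, zero_mem_lowerSums fun _ => le_max_right _ _⟩ hplus).trans
    (hminus.csSup_eq ⟨0, zero_mem_lowerSums hnegPart⟩).ge)

end

/-- for a convex cone `K ⊆ ℝ^Ω`, with
`K_b = {k ∈ K : k⁻ bounded}`, there exists a finitely additive probability `m`
on `2^Ω` integrating every `k ∈ K_b` with `m(k) ≤ 0` if and only if `K`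
contains no sure win (no `k ∈ K` with `k ≥ 1` pointwise). -/
theorem separating_probability_iff_no_sure_win {Ω : Type*} [Nonempty Ω]
    (K : Set (Ω → ℝ))
    (hadd : ∀ f g : Ω → ℝ, f ∈ K → g ∈ K → f + g ∈ K)
    (hsmul : ∀ (c : ℝ), 0 ≤ c → ∀ f ∈ K, c • f ∈ K) :
    (∃ m : FinAddProb Ω,
      ∀ k ∈ K, (∃ M : ℝ, ∀ ω, max (-(k ω)) 0 ≤ M) →
        FAIntegrable m.toFinAddMeasure k ∧ faInt m.toFinAddMeasure k ≤ 0) ↔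
    ¬ ∃ k ∈ K, ∀ ω, (1 : ℝ) ≤ k ω := by
  constructor
  · rintro ⟨m, hm⟩ ⟨k, hk, hk1⟩
    obtain ⟨hint, hle⟩ := hm k hk ⟨0, fun ω => max_le (by linarith [hk1 ω]) le_rfl⟩
    linarith [one_le_faInt_of_one_le m hk1 hint]
  · intro hsure
    have hP : ∀ k ∈ PointedCone.insertZero K hadd hsmul, ∃ ω, k ω < 1 := by
      rintro k (rfl | hk)
      · exact ⟨Classical.arbitrary Ω, zero_lt_one⟩
      · by_contra! hk1
        exact hsure ⟨k, hk, hk1⟩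
    obtain ⟨m, hm⟩ := exists_finAddProb_of_forall_exists_lt_one hP
    exact ⟨m, fun k hk => hm k (mem_insert_of_mem _ hk)⟩
end

section
/- Let L be a Banach lattice containing the constants (a sublattice of ℝ^Ω with sup-compatible norm) and φ : L → ℝ a monotone functional satisfying lim_n inf{φ(n·f) : f ∈ L, φ(f) > η} = ∞ for every η > 0. Then limsup_n φ(h_n) ≤ 0 whenever (h_n) converges to 0 in norm. In particular, every convex monotone real-valued functional on a Banach lattice is continuous. -/
/-!
A sequence `x` with `‖x n‖ ≤ 2⁻ⁿ` in a Banach lattice is dominated, together with `n • x n`, by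
the single element `g = ∑ (n + 1) • |x n|`, which converges absolutely. If `φ (h n) ≥ ε` infinitely
often along a null sequence, pass to such a fast subsequence `x`; pseudo-homogeneity pushes
`φ (N • x N)` above `φ g + 1` for large `N`, contradicting `N • x N ≤ g` and monotonicity. The same
domination shows that a monotone functional is bounded above near `0`, which for a convex
functional already forces continuity.
-/

open Filter Topology

section SeminormedAddCommGroup

variable {E : Type*} [SeminormedAddCommGroup E]

lemma exists_seq_norm_le_geometric_of_frequently {p : ℕ → E → Prop}
    (hp : ∀ k, ∃ᶠ z in 𝓝 0, p k z) :
    ∃ x : ℕ → E, ∀ k, ‖x k‖ ≤ (1 / 2) ^ k ∧ p k (x k) := by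
  have hsmall (k : ℕ) : ∀ᶠ z in 𝓝 (0 : E), ‖z‖ ≤ (1 / 2) ^ k := by
    filter_upwards [Metric.closedBall_mem_nhds (0 : E) (by positivity : (0 : ℝ) < (1 / 2) ^ k)]
      with z hz using by simpa using hz
  choose x hx using fun k => ((hp k).and_eventually (hsmall k)).exists
  exact ⟨x, fun k => ⟨(hx k).2, (hx k).1⟩⟩

end SeminormedAddCommGroup

section BanachLattice

variable {E : Type*} [NormedAddCommGroup E] [Lattice E] [HasSolidNorm E] [IsOrderedAddMonoid E]
  [CompleteSpace E]

lemma exists_upper_bound_of_norm_le_geometric (x : ℕ → E) (hx : ∀ n, ‖x n‖ ≤ (1 / 2) ^ n) :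
    ∃ g : E, ∀ n : ℕ, x n ≤ g ∧ n • x n ≤ g := by
  set y : ℕ → E := fun n => (n + 1) • |x n|
  have hy_nonneg (n : ℕ) : 0 ≤ y n := nsmul_nonneg (abs_nonneg _) _
  have hy_norm (n : ℕ) : ‖y n‖ ≤ ((n : ℝ) + 1) * (1 / 2) ^ n := by
    calc ‖y n‖ ≤ ((n + 1 : ℕ) : ℝ) * ‖|x n|‖ := norm_nsmul_le
      _ = ((n : ℝ) + 1) * ‖x n‖ := by rw [norm_abs_eq_norm]; push_cast; ring
      _ ≤ ((n : ℝ) + 1) * (1 / 2) ^ n := by gcongr; exact hx n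
  have hsummable : Summable y := by
    refine Summable.of_norm_bounded ?_ hy_norm
    simpa [add_mul] using (summable_pow_mul_geometric_of_norm_lt_one (R := ℝ) 1
      (by norm_num : ‖(1 / 2 : ℝ)‖ < 1)).add (summable_geometric_two)
  refine ⟨∑' n, y n, fun n => ?_⟩
  have hy_le : y n ≤ ∑' n, y n := hsummable.le_tsum n fun j _ => hy_nonneg j
  constructor
  · calc x n ≤ |x n| := le_abs_self _
      _ = 1 • |x n| := (one_nsmul _).symm
      _ ≤ y n := nsmul_le_nsmul_left (abs_nonneg _) (by omega)
      _ ≤ _ := hy_le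
  · calc n • x n ≤ n • |x n| := nsmul_le_nsmul_right (le_abs_self _) n
      _ ≤ y n := nsmul_le_nsmul_left (abs_nonneg _) (by omega)
      _ ≤ _ := hy_le

lemma Monotone.isBoundedUnder_le_nhds_zero {ψ : E → ℝ} (hψ : Monotone ψ) :
    IsBoundedUnder (· ≤ ·) (𝓝 0) ψ := by
  by_contra hunbdd
  have hlarge (k : ℕ) : ∃ᶠ z in 𝓝 (0 : E), (k : ℝ) < ψ z := by
    simpa [not_frequently, not_lt] using fun h => hunbdd ⟨k, h⟩
  obtain ⟨x, hx⟩ := exists_seq_norm_le_geometric_of_frequently hlarge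
  obtain ⟨g, hg⟩ := exists_upper_bound_of_norm_le_geometric x fun k => (hx k).1
  obtain ⟨k, hk⟩ := exists_nat_gt (ψ g)
  linarith [(hx k).2, hψ (hg k).1]

lemma Monotone.eventually_nhds_zero_lt_of_pseudoHomogeneous {φ : E → ℝ} (hmono : Monotone φ)
    (hpseudo : ∀ η : ℝ, 0 < η → ∀ M : ℝ, ∃ N : ℕ, ∀ n ≥ N, ∀ f : E, η < φ f → M ≤ φ (n • f))
    {ε : ℝ} (hε : 0 < ε) :
    ∀ᶠ z in 𝓝 (0 : E), φ z < ε := by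
  by_contra hsmall
  have hlarge : ∃ᶠ z in 𝓝 (0 : E), ε ≤ φ z := by simpa using hsmall
  obtain ⟨x, hx⟩ := exists_seq_norm_le_geometric_of_frequently fun _ => hlarge
  obtain ⟨g, hg⟩ := exists_upper_bound_of_norm_le_geometric x fun k => (hx k).1
  obtain ⟨N, hN⟩ := hpseudo (ε / 2) (by linarith) (φ g + 1)
  have hbig : φ g + 1 ≤ φ (N • x N) := hN N le_rfl (x N) (by linarith [(hx N).2])
  linarith [hmono (hg N).2]

lemma ConvexOn.continuous_of_monotone [NormedSpace ℝ E] {ψ : E → ℝ} (hmono : Monotone ψ)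
    (hconv : ConvexOn ℝ Set.univ ψ) : Continuous ψ := by
  have hbdd : ∃ x₀ ∈ Set.univ, IsBoundedUnder (· ≤ ·) (𝓝 x₀) ψ :=
    ⟨0, Set.mem_univ 0, hmono.isBoundedUnder_le_nhds_zero⟩
  exact continuousOn_univ.mp <|
    ((hconv.continuousOn_tfae isOpen_univ ⟨0, trivial⟩).out 3 1).mp hbdd

end BanachLattice

/-- on a Banach lattice `E`, a monotone functional `φ`
satisfying the pseudo-homogeneity condition
`lim_n inf {φ(n•f) : φ(f) > η} = ∞` for every `η > 0` has
`limsup_n φ(h_n) ≤ 0` whenever `h_n → 0` in norm; in particular every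
convex monotone real functional on a Banach lattice is continuous. -/
theorem banach_lattice_monotone_upper_semicontinuity
    {E : Type*} [NormedAddCommGroup E] [Lattice E] [HasSolidNorm E] [IsOrderedAddMonoid E] [NormedSpace ℝ E] [CompleteSpace E]
    (φ : E → ℝ) (hmono : Monotone φ)
    (hpseudo : ∀ η : ℝ, 0 < η → ∀ M : ℝ, ∃ N : ℕ, ∀ n ≥ N, ∀ f : E,
        η < φ f → M ≤ φ (n • f)) :
    (∀ h : ℕ → E, Tendsto h atTop (nhds 0) →
      ∀ ε : ℝ, 0 < ε → ∀ᶠ n in atTop, φ (h n) < ε) ∧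
    (∀ ψ : E → ℝ, Monotone ψ → ConvexOn ℝ Set.univ ψ → Continuous ψ) :=
  ⟨fun _ hh _ hε => hh.eventually (hmono.eventually_nhds_zero_lt_of_pseudoHomogeneous hpseudo hε),
    fun _ hψ hconv => hconv.continuous_of_monotone hψ⟩
end

section
/- Let L ⊆ ℝ^Ω be a linear subspace. A linear functional φ on L admits a representing measure (i.e., m ∈ ba with L ⊆ L(m) and φ(f) = φ(1)m(f), or more generally φ(f) = λ(f) for some λ ∈ ba) if and only if there exists μ ∈ ba with L ⊆ L(μ) such that φ is continuous with respect to the L(μ)-seminorm ‖f‖ = μ(|f|). Moreover, if φ is positive and L is a vector sublattice, the representing measure may be chosen positive. -/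
open Filter Set

/-!
For a positive finitely additive `μ`, the supremum `μ(g)` of the lower sums of a nonnegative `g`
is monotone, positively homogeneous and additive on functions with bounded lower sums. Its
subadditivity is the one delicate point: a lower sum for `g ≤ h₁ + h₂` is split into two bounded
pieces, each uniformly approximated from below by layer-cake simple functions. Hence
`f ↦ μ(|f|)` is a seminorm on the space `L(μ)` of integrable functions.

If `|φ| ≤ C μ(|·|)` on `L`, Hahn–Banach extends `φ` to a linear `ψ` on `L(μ)` with the same
bound. Then `ν E = ψ(1_E)` is finitely additive with `|ν| ≤ C μ`, so `ν = λ⁺ - λ⁻` with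
`λ± = (C μ ± ν) / 2 ≤ C μ`. The functionals `ψ` and `f ↦ λ⁺(f) - λ⁻(f)` agree on simple functions
and are both continuous for `μ(|·|)`; since simple functions approximate `f⁺` and `f⁻` from below
in this seminorm, they agree on `L(μ)`. Conversely a representation by `λ⁺ - λ⁻` gives the bound
with `μ = λ⁺ + λ⁻` and `C = 2`.

If `L` is a lattice and `φ` is positive, then `φ f ≤ φ f⁺ ≤ C μ(f⁺)`, and extending with the
sublinear bound `C μ(f⁺)` yields a positive `ψ`, so that `ν` itself is a positive measure.
-/

open scoped Pointwise

noncomputable def indicatorSum {Ω ι : Type*} [Fintype ι] (a : ι → ℝ) (E : ι → Set Ω) : Ω → ℝ :=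
  fun ω => ∑ i, a i * (E i).indicator (fun _ => (1 : ℝ)) ω

section indicatorSum

variable {Ω ι κ : Type*} [Fintype ι] [Fintype κ]

lemma indicatorSum_sumElim (a : ι → ℝ) (b : κ → ℝ) (E : ι → Set Ω) (F : κ → Set Ω) :
    indicatorSum (Sum.elim a b) (Sum.elim E F) = indicatorSum a E + indicatorSum b F := by
  ext ω
  simp [indicatorSum, Fintype.sum_sum_type]

lemma indicatorSum_comp_equiv (e : κ ≃ ι) (a : ι → ℝ) (E : ι → Set Ω) :
    indicatorSum (a ∘ e) (E ∘ e) = indicatorSum a E := by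
  ext ω
  exact e.sum_comp (fun i => a i * (E i).indicator (fun _ => (1 : ℝ)) ω)

lemma indicatorSum_const (c : ℝ) :
    indicatorSum (fun _ : Unit => c) (fun _ => (univ : Set Ω)) = fun _ => c := by
  ext ω
  simp [indicatorSum]

lemma indicatorSum_empty :
    indicatorSum (Empty.elim : Empty → ℝ) (Empty.elim : Empty → Set Ω) = 0 := by
  ext ω
  simp [indicatorSum]

lemma indicatorSum_nonneg {a : ι → ℝ} (ha : 0 ≤ a) (E : ι → Set Ω) : 0 ≤ indicatorSum a E :=
  fun ω => Finset.sum_nonneg fun i _ => mul_nonneg (ha i) (Set.indicator_nonneg (by simp) ω)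

lemma indicatorSum_le_sum {a : ι → ℝ} (ha : 0 ≤ a) (E : ι → Set Ω) (ω : Ω) :
    indicatorSum a E ω ≤ ∑ i, a i :=
  Finset.sum_le_sum fun i _ => mul_le_of_le_one_right (ha i)
    (Set.indicator_le_self' (by simp) ω)

/-- The layer-cake function `ε ⌊g / ε⌋` is a simple function within `ε` below `g`. -/
theorem exists_indicatorSum_approx {g : Ω → ℝ} {M ε : ℝ} (hε : 0 < ε) (hg : 0 ≤ g)
    (hgM : ∀ ω, g ω ≤ M) :
    ∃ (n : ℕ) (a : Fin n → ℝ) (E : Fin n → Set Ω),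
      0 ≤ a ∧ indicatorSum a E ≤ g ∧ ∀ ω, g ω ≤ indicatorSum a E ω + ε := by
  classical
  set K := ⌊M / ε⌋₊
  set layer : ℕ → Set Ω := fun k => {ω | (k + 1 : ℝ) * ε ≤ g ω}
  refine ⟨K, fun _ => ε, fun k => layer k, fun _ => hε.le, ?_⟩
  have hfloor : ∀ ω, indicatorSum (fun _ => ε) (fun k : Fin K => layer k) ω
      = ε * ⌊g ω / ε⌋₊ := by
    intro ω
    have hle : ⌊g ω / ε⌋₊ ≤ K :=
      Nat.floor_le_floor (div_le_div_of_nonneg_right (hgM ω) hε.le)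
    have hterm : ∀ k : ℕ, ε * (layer k).indicator (fun _ => (1 : ℝ)) ω
        = if k < ⌊g ω / ε⌋₊ then ε else 0 := by
      intro k
      have : (k + 1 : ℝ) * ε ≤ g ω ↔ k < ⌊g ω / ε⌋₊ := by
        rw [← le_div_iff₀ hε, Nat.lt_iff_add_one_le, Nat.le_floor_iff (div_nonneg (hg ω) hε.le)]
        push_cast; rfl
      by_cases hk : (k + 1 : ℝ) * ε ≤ g ω <;> simp [layer, Set.indicator, hk, ← this]
    calc _ = ∑ k ∈ Finset.range K, if k < ⌊g ω / ε⌋₊ then ε else 0 := by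
          simp only [indicatorSum, ← hterm]
          exact Fin.sum_univ_eq_sum_range
            (fun k => ε * (layer k).indicator (fun _ => (1 : ℝ)) ω) _
      _ = ∑ k ∈ Finset.range ⌊g ω / ε⌋₊, ε := by
          rw [← Finset.sum_filter]
          congr 1
          ext k
          simp only [Finset.mem_filter, Finset.mem_range]
          omega
      _ = ε * ⌊g ω / ε⌋₊ := by simp [mul_comm]
  refine ⟨fun ω => ?_, fun ω => ?_⟩
  · rw [hfloor, ← le_div_iff₀' hε]
    exact Nat.floor_le (div_nonneg (hg ω) hε.le)
  · have := Nat.lt_floor_add_one (g ω / ε)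
    rw [div_lt_iff₀ hε] at this
    rw [hfloor]
    linarith

end indicatorSum

namespace FinAddMeasure

variable {Ω : Type*}

def ofAdditive (ν : Set Ω → ℝ) (hν : ∀ E, 0 ≤ ν E)
    (hadd : ∀ E F, Disjoint E F → ν (E ∪ F) = ν E + ν F) : FinAddMeasure Ω where
  μ := ν
  nonneg := hν
  empty := by simpa using hadd ∅ ∅ (disjoint_empty _)
  add := hadd

@[simp] lemma ofAdditive_apply (ν : Set Ω → ℝ) (hν : ∀ E, 0 ≤ ν E)
    (hadd : ∀ E F, Disjoint E F → ν (E ∪ F) = ν E + ν F) (E : Set Ω) :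
    (ofAdditive ν hν hadd).μ E = ν E := rfl

instance : Zero (FinAddMeasure Ω) :=
  ⟨ofAdditive 0 (fun _ => le_rfl) fun _ _ _ => (add_zero 0).symm⟩

instance : Add (FinAddMeasure Ω) :=
  ⟨fun P N => ofAdditive (P.μ + N.μ) (fun E => add_nonneg (P.nonneg E) (N.nonneg E))
    fun E F h => by simp only [Pi.add_apply, P.add E F h, N.add E F h]; ring⟩

@[simp] lemma zero_apply (E : Set Ω) : (0 : FinAddMeasure Ω).μ E = 0 := rfl

@[simp] lemma add_apply (P N : FinAddMeasure Ω) (E : Set Ω) :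
    (P + N).μ E = P.μ E + N.μ E := rfl

variable (m : FinAddMeasure Ω)

lemma measure_biUnion_finset {κ : Type*} (s : Finset κ) {D : κ → Set Ω}
    (hD : (s : Set κ).PairwiseDisjoint D) : m.μ (⋃ k ∈ s, D k) = ∑ k ∈ s, m.μ (D k) := by
  classical
  induction s using Finset.induction_on with
  | empty => simp [m.empty]
  | insert k s hk ih =>
    rw [Finset.coe_insert] at hD
    rw [Finset.set_biUnion_insert, m.add, Finset.sum_insert hk, ih (hD.subset (by simp))]
    exact Set.disjoint_iUnion₂_right.mpr fun l hl =>
      hD (by simp) (by simp [hl]) (fun h => hk (h ▸ hl))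

def elemInt {ι : Type*} [Fintype ι] (a : ι → ℝ) (E : ι → Set Ω) : ℝ :=
  ∑ i, a i * m.μ (E i)

lemma elemInt_sumElim {ι κ : Type*} [Fintype ι] [Fintype κ] (a : ι → ℝ) (b : κ → ℝ)
    (E : ι → Set Ω) (F : κ → Set Ω) :
    m.elemInt (Sum.elim a b) (Sum.elim E F) = m.elemInt a E + m.elemInt b F := by
  simp [elemInt, Fintype.sum_sum_type]

/-- On each nonempty atom of the Boolean algebra generated by `G`, the coefficient of its
measure is a value of `indicatorSum e G`. -/
theorem elemInt_nonneg {ι : Type*} [Fintype ι] {e : ι → ℝ} {G : ι → Set Ω}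
    (h : 0 ≤ indicatorSum e G) : 0 ≤ m.elemInt e G := by
  classical
  let sig : Ω → ι → Bool := fun ω i => decide (ω ∈ G i)
  have hG : ∀ i, G i = ⋃ σ ∈ Finset.univ.filter (fun σ : ι → Bool => σ i), sig ⁻¹' {σ} := by
    intro i
    ext ω
    simp [sig]
  have hdisj : ∀ s : Finset (ι → Bool), (s : Set (ι → Bool)).PairwiseDisjoint (sig ⁻¹' {·}) :=
    fun s σ _ τ _ hστ => Set.disjoint_left.mpr fun ω h₁ h₂ => hστ (h₁.symm.trans h₂)
  have hsum : m.elemInt e G = ∑ σ, (∑ i, if σ i then e i else 0) * m.μ (sig ⁻¹' {σ}) := by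
    simp_rw [elemInt, Finset.sum_mul, ite_mul, zero_mul]
    rw [Finset.sum_comm]
    refine Finset.sum_congr rfl fun i _ => ?_
    rw [hG i, m.measure_biUnion_finset _ (hdisj _), Finset.mul_sum, Finset.sum_filter]
  rw [hsum]
  refine Finset.sum_nonneg fun σ _ => ?_
  rcases (sig ⁻¹' {σ}).eq_empty_or_nonempty with hσ | ⟨ω, rfl⟩
  · simp [hσ, m.empty]
  · refine mul_nonneg ((h ω).trans_eq (Finset.sum_congr rfl fun i _ => ?_)) (m.nonneg _)
    by_cases hi : ω ∈ G i <;> simp [sig, hi]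

theorem elemInt_mono {ι κ : Type*} [Fintype ι] [Fintype κ] {a : ι → ℝ} {b : κ → ℝ}
    {E : ι → Set Ω} {F : κ → Set Ω} (h : indicatorSum a E ≤ indicatorSum b F) :
    m.elemInt a E ≤ m.elemInt b F := by
  have := m.elemInt_nonneg (e := Sum.elim (-a) b) (G := Sum.elim E F) fun ω => by
    simpa [indicatorSum_sumElim, indicatorSum] using h ω
  simpa [elemInt_sumElim, elemInt] using this

lemma elemInt_le_smul {μ : FinAddMeasure Ω} {c : ℝ} (h : ∀ E, m.μ E ≤ c * μ.μ E) {ι : Type*}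
    [Fintype ι] {a : ι → ℝ} (ha : 0 ≤ a) (E : ι → Set Ω) : m.elemInt a E ≤ c * μ.elemInt a E := by
  rw [elemInt, elemInt, Finset.mul_sum]
  exact Finset.sum_le_sum fun i _ =>
    (mul_le_mul_of_nonneg_left (h (E i)) (ha i)).trans_eq (by ring)

def sums (g : Ω → ℝ) : Set ℝ := lowerSums univ m.μ g

noncomputable def lintegral (g : Ω → ℝ) : ℝ := sSup (m.sums g)

variable {m} {g g' : Ω → ℝ} {r r' : ℝ}

lemma mem_sums_iff : r ∈ m.sums g ↔ ∃ (n : ℕ) (a : Fin n → ℝ) (E : Fin n → Set Ω),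
    0 ≤ a ∧ indicatorSum a E ≤ g ∧ r = m.elemInt a E :=
  ⟨fun ⟨n, a, E, ha, _, hle, hr⟩ => ⟨n, a, E, ha, hle, hr⟩,
    fun ⟨n, a, E, ha, hle, hr⟩ => ⟨n, a, E, ha, fun _ => trivial, hle, hr⟩⟩

lemma elemInt_mem_sums {ι : Type*} [Fintype ι] {a : ι → ℝ} {E : ι → Set Ω} (ha : 0 ≤ a)
    (hle : indicatorSum a E ≤ g) : m.elemInt a E ∈ m.sums g := by
  let e := (Fintype.equivFin ι).symm
  refine mem_sums_iff.mpr ⟨_, a ∘ e, E ∘ e, fun k => ha (e k), ?_, ?_⟩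
  · rwa [indicatorSum_comp_equiv]
  · exact (e.sum_comp fun i => a i * m.μ (E i)).symm

lemma zero_mem_sums (hg : 0 ≤ g) : 0 ∈ m.sums g := by
  simpa [elemInt] using elemInt_mem_sums (m := m) (a := (Empty.elim : Empty → ℝ))
    (E := Empty.elim) (fun i => i.elim) (indicatorSum_empty.trans_le hg)

lemma sums_mono (h : g ≤ g') : m.sums g ⊆ m.sums g' := fun _ hr =>
  let ⟨n, a, E, ha, hle, hr⟩ := mem_sums_iff.mp hr
  mem_sums_iff.mpr ⟨n, a, E, ha, hle.trans h, hr⟩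

lemma le_elemInt_of_mem_sums {κ : Type*} [Fintype κ] {b : κ → ℝ} {F : κ → Set Ω}
    (hr : r ∈ m.sums g) (hg : g ≤ indicatorSum b F) : r ≤ m.elemInt b F := by
  obtain ⟨n, a, E, -, hle, rfl⟩ := mem_sums_iff.mp hr
  exact m.elemInt_mono (hle.trans hg)

lemma add_mem_sums (hr : r ∈ m.sums g) (hr' : r' ∈ m.sums g') : r + r' ∈ m.sums (g + g') := by
  obtain ⟨n, a, E, ha, hle, rfl⟩ := mem_sums_iff.mp hr
  obtain ⟨n', a', E', ha', hle', rfl⟩ := mem_sums_iff.mp hr'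
  rw [← elemInt_sumElim]
  refine elemInt_mem_sums (by rintro (i | i); exacts [ha i, ha' i]) ?_
  rw [indicatorSum_sumElim]
  exact add_le_add hle hle'

lemma le_lintegral (hb : BddAbove (m.sums g)) (hr : r ∈ m.sums g) : r ≤ m.lintegral g :=
  le_csSup hb hr

lemma lintegral_le (hg : 0 ≤ g) (h : ∀ r ∈ m.sums g, r ≤ r') : m.lintegral g ≤ r' :=
  csSup_le ⟨0, zero_mem_sums hg⟩ h

lemma lintegral_nonneg (hg : 0 ≤ g) (hb : BddAbove (m.sums g)) : 0 ≤ m.lintegral g :=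
  le_lintegral hb (zero_mem_sums hg)

lemma lintegral_mono (h : g ≤ g') (hg : 0 ≤ g) (hb : BddAbove (m.sums g')) :
    m.lintegral g ≤ m.lintegral g' :=
  csSup_le_csSup hb ⟨0, zero_mem_sums hg⟩ (sums_mono h)

section indicatorSum

variable {κ : Type*} [Fintype κ] {b : κ → ℝ} (F : κ → Set Ω)

lemma bddAbove_sums_of_le_indicatorSum (hg : g ≤ indicatorSum b F) : BddAbove (m.sums g) :=
  ⟨_, fun _ hr => le_elemInt_of_mem_sums hr hg⟩

lemma lintegral_indicatorSum (hb : 0 ≤ b) : m.lintegral (indicatorSum b F) = m.elemInt b F :=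
  le_antisymm
    (lintegral_le (indicatorSum_nonneg hb F) fun _ hr => le_elemInt_of_mem_sums hr le_rfl)
    (le_lintegral (bddAbove_sums_of_le_indicatorSum F le_rfl) (elemInt_mem_sums hb le_rfl))

end indicatorSum

lemma bddAbove_sums_zero : BddAbove (m.sums 0) :=
  bddAbove_sums_of_le_indicatorSum Empty.elim indicatorSum_empty.ge

lemma lintegral_zero : m.lintegral 0 = 0 := by
  have h := lintegral_indicatorSum (m := m) (b := (Empty.elim : Empty → ℝ)) Empty.elim
    (fun i => i.elim)
  rw [indicatorSum_empty] at h
  simpa [elemInt] using h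

variable {P μ : FinAddMeasure Ω} {h₁ h₂ : Ω → ℝ} {c : ℝ}

/-- A lower sum `s ≤ h₁ + h₂` is split as `min s h₁ + (s - min s h₁)`; both parts are bounded,
so they are uniformly approximated from below by simple functions `t₁ ≤ h₁` and `t₂ ≤ h₂`. -/
theorem le_lintegral_add_lintegral (h₁0 : 0 ≤ h₁) (h₂0 : 0 ≤ h₂)
    (hb₁ : BddAbove (m.sums h₁)) (hb₂ : BddAbove (m.sums h₂)) (hg : g ≤ h₁ + h₂)
    (hr : r ∈ m.sums g) : r ≤ m.lintegral h₁ + m.lintegral h₂ := by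
  obtain ⟨n, a, E, ha, hle, rfl⟩ := mem_sums_iff.mp hr
  set s := indicatorSum a E
  have hs0 : 0 ≤ s := indicatorSum_nonneg ha E
  have hsM : ∀ ω, s ω ≤ ∑ i, a i := indicatorSum_le_sum ha E
  refine le_of_forall_pos_le_add fun δ hδ => ?_
  set ε := δ / (2 * m.μ univ + 1)
  have hμ := m.nonneg univ
  have hε : 0 < ε := by positivity
  obtain ⟨n₁, a₁, E₁, ha₁, ht₁, ht₁'⟩ := exists_indicatorSum_approx (g := fun ω => min (s ω) (h₁ ω))
    hε (fun ω => le_min (hs0 ω) (h₁0 ω)) (fun ω => (min_le_left _ _).trans (hsM ω))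
  obtain ⟨n₂, a₂, E₂, ha₂, ht₂, ht₂'⟩ :=
    exists_indicatorSum_approx (g := fun ω => s ω - min (s ω) (h₁ ω)) hε
      (fun ω => sub_nonneg.mpr (min_le_left _ _))
      (fun ω => (sub_le_self _ (le_min (hs0 ω) (h₁0 ω))).trans (hsM ω))
  have hle₁ : m.elemInt a₁ E₁ ≤ m.lintegral h₁ :=
    le_lintegral hb₁ (elemInt_mem_sums ha₁ fun ω => (ht₁ ω).trans (min_le_right _ _))
  have hle₂ : m.elemInt a₂ E₂ ≤ m.lintegral h₂ := by
    refine le_lintegral hb₂ (elemInt_mem_sums ha₂ fun ω => (ht₂ ω).trans ?_)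
    show s ω - min (s ω) (h₁ ω) ≤ h₂ ω
    have := hg ω
    simp only [Pi.add_apply] at this
    rcases min_choice (s ω) (h₁ ω) with h | h <;> rw [h] <;>
      linarith [show 0 ≤ h₂ ω from h₂0 ω, hle ω]
  have hcomp : m.elemInt a E ≤ m.elemInt a₁ E₁ + (m.elemInt a₂ E₂ + 2 * ε * m.μ univ) := by
    have := m.elemInt_mono (a := a) (E := E)
      (b := Sum.elim a₁ (Sum.elim a₂ fun _ : Unit => 2 * ε))
      (F := Sum.elim E₁ (Sum.elim E₂ fun _ => univ)) fun ω => by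
        simp only [indicatorSum_sumElim, indicatorSum_const, Pi.add_apply]
        linarith [ht₁' ω, ht₂' ω]
    simpa [elemInt_sumElim, elemInt] using this
  have : 2 * ε * m.μ univ ≤ δ := by
    have : ε * (2 * m.μ univ + 1) = δ := div_mul_cancel₀ δ (by positivity)
    nlinarith
  linarith

lemma lintegral_le_add_of_le (hg : 0 ≤ g) (h₁0 : 0 ≤ h₁) (h₂0 : 0 ≤ h₂)
    (hb₁ : BddAbove (m.sums h₁)) (hb₂ : BddAbove (m.sums h₂)) (hle : g ≤ h₁ + h₂) :
    m.lintegral g ≤ m.lintegral h₁ + m.lintegral h₂ :=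
  lintegral_le hg fun _ => le_lintegral_add_lintegral h₁0 h₂0 hb₁ hb₂ hle

section Additivity

variable (hg : 0 ≤ g) (hg' : 0 ≤ g') (hb : BddAbove (m.sums g)) (hb' : BddAbove (m.sums g'))
include hg hg' hb hb'

lemma bddAbove_sums_add : BddAbove (m.sums (g + g')) :=
  ⟨_, fun _ => le_lintegral_add_lintegral hg hg' hb hb' le_rfl⟩

theorem lintegral_add : m.lintegral (g + g') = m.lintegral g + m.lintegral g' := by
  refine le_antisymm (lintegral_le (add_nonneg hg hg') fun _ =>
    le_lintegral_add_lintegral hg hg' hb hb' le_rfl) ?_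
  have hB := bddAbove_sums_add hg hg' hb hb'
  rw [← le_sub_iff_add_le]
  refine lintegral_le hg fun r hr => ?_
  rw [le_sub_comm]
  exact lintegral_le hg' fun r' hr' =>
    le_sub_iff_add_le'.mpr (le_lintegral hB (add_mem_sums hr hr'))

end Additivity

lemma smul_mem_sums (hc : 0 ≤ c) (hr : r ∈ m.sums g) : c * r ∈ m.sums (c • g) := by
  obtain ⟨n, a, E, ha, hle, rfl⟩ := mem_sums_iff.mp hr
  have hsmul : indicatorSum (c • a) E = c • indicatorSum a E := by
    ext ω
    simp [indicatorSum, Finset.mul_sum, mul_assoc]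
  have := elemInt_mem_sums (m := m) (smul_nonneg hc ha) (hsmul ▸ smul_le_smul_of_nonneg_left hle hc)
  simpa [elemInt, Finset.mul_sum, mul_assoc] using this

lemma sums_smul (hc : 0 < c) : m.sums (c • g) = c • m.sums g := by
  ext r
  refine ⟨fun hr => ⟨c⁻¹ * r, ?_, by simp [hc.ne']⟩,
    fun ⟨r, hr, hrc⟩ => hrc ▸ smul_mem_sums hc.le hr⟩
  simpa [smul_smul, hc.ne'] using smul_mem_sums (inv_nonneg.mpr hc.le) hr

lemma bddAbove_sums_smul_iff (hc : 0 < c) : BddAbove (m.sums (c • g)) ↔ BddAbove (m.sums g) := by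
  rw [sums_smul hc, bddAbove_smul_iff_of_pos hc]

lemma lintegral_smul (hc : 0 ≤ c) : m.lintegral (c • g) = c * m.lintegral g := by
  rcases hc.eq_or_lt with rfl | hc
  · simp [lintegral_zero]
  · rw [lintegral, sums_smul hc, Real.sSup_smul_of_nonneg hc.le, smul_eq_mul, lintegral]

lemma le_smul_lintegral_of_mem_sums (hc : 0 ≤ c) (h : ∀ E, P.μ E ≤ c * μ.μ E)
    (hb : BddAbove (μ.sums g)) (hr : r ∈ P.sums g) : r ≤ c * μ.lintegral g := by
  obtain ⟨n, a, E, ha, hle, rfl⟩ := mem_sums_iff.mp hr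
  exact (P.elemInt_le_smul h ha E).trans
    (mul_le_mul_of_nonneg_left (le_lintegral hb (elemInt_mem_sums ha hle)) hc)

lemma bddAbove_sums_of_le_smul (hc : 0 ≤ c) (h : ∀ E, P.μ E ≤ c * μ.μ E)
    (hb : BddAbove (μ.sums g)) : BddAbove (P.sums g) :=
  ⟨_, fun _ => le_smul_lintegral_of_mem_sums hc h hb⟩

lemma lintegral_le_smul (hc : 0 ≤ c) (h : ∀ E, P.μ E ≤ c * μ.μ E) (hg : 0 ≤ g)
    (hb : BddAbove (μ.sums g)) : P.lintegral g ≤ c * μ.lintegral g :=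
  lintegral_le hg fun _ => le_smul_lintegral_of_mem_sums hc h hb

lemma bddAbove_sums_add_measure {N : FinAddMeasure Ω} (hP : BddAbove (P.sums g))
    (hN : BddAbove (N.sums g)) : BddAbove ((P + N).sums g) := by
  obtain ⟨B, hB⟩ := hP
  obtain ⟨B', hB'⟩ := hN
  refine ⟨B + B', fun r hr => ?_⟩
  obtain ⟨n, a, E, ha, hle, rfl⟩ := mem_sums_iff.mp hr
  have : (P + N).elemInt a E = P.elemInt a E + N.elemInt a E := by
    simp [elemInt, mul_add, Finset.sum_add_distrib]
  rw [this]
  exact add_le_add (hB (elemInt_mem_sums ha hle)) (hB' (elemInt_mem_sums ha hle))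

lemma lintegral_zero_measure (hg : 0 ≤ g) : (0 : FinAddMeasure Ω).lintegral g = 0 := by
  have hle : ∀ r ∈ (0 : FinAddMeasure Ω).sums g, r ≤ 0 := fun r hr => by
    obtain ⟨n, a, E, -, -, rfl⟩ := mem_sums_iff.mp hr
    simp [elemInt]
  exact le_antisymm (lintegral_le hg hle) (lintegral_nonneg hg ⟨0, hle⟩)

lemma lintegral_eq_elemInt_add (hb : BddAbove (m.sums g)) {n : ℕ} {a : Fin n → ℝ}
    {E : Fin n → Set Ω} (ha : 0 ≤ a) (hs : indicatorSum a E ≤ g) :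
    m.lintegral g = m.elemInt a E + m.lintegral (g - indicatorSum a E) := by
  have hs0 := indicatorSum_nonneg ha E
  rw [← lintegral_indicatorSum E ha, ← lintegral_add hs0 (sub_nonneg.mpr hs)
    (bddAbove_sums_of_le_indicatorSum E le_rfl) (hb.mono (sums_mono (sub_le_self _ hs0))),
    add_sub_cancel]

lemma exists_lintegral_sub_le (hg : 0 ≤ g) (hb : BddAbove (m.sums g)) {ε : ℝ} (hε : 0 < ε) :
    ∃ (n : ℕ) (a : Fin n → ℝ) (E : Fin n → Set Ω), 0 ≤ a ∧ indicatorSum a E ≤ g ∧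
      m.lintegral (g - indicatorSum a E) ≤ ε := by
  obtain ⟨r, hr, hlt⟩ := exists_lt_of_lt_csSup ⟨0, zero_mem_sums hg⟩
    (sub_lt_self (m.lintegral g) hε)
  obtain ⟨n, a, E, ha, hs, rfl⟩ := mem_sums_iff.mp hr
  refine ⟨n, a, E, ha, hs, ?_⟩
  have := lintegral_eq_elemInt_add hb ha hs
  linarith

lemma lintegral_le_elemInt_add {C : ℝ} (hC : 0 ≤ C)
    (hP : ∀ E, P.μ E ≤ C * μ.μ E) (hb : BddAbove (μ.sums g)) {n : ℕ} {a : Fin n → ℝ}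
    {E : Fin n → Set Ω} (ha : 0 ≤ a) (hs : indicatorSum a E ≤ g) :
    P.lintegral g ≤ P.elemInt a E + C * μ.lintegral (g - indicatorSum a E) := by
  have hb' : BddAbove (μ.sums (g - indicatorSum a E)) :=
    hb.mono (sums_mono (sub_le_self _ (indicatorSum_nonneg ha E)))
  rw [lintegral_eq_elemInt_add (bddAbove_sums_of_le_smul hC hP hb) ha hs]
  exact add_le_add le_rfl (lintegral_le_smul hC hP (sub_nonneg.mpr hs) hb')

end FinAddMeasure

section faInt

open FinAddMeasure

variable {Ω : Type*} {m P N : FinAddMeasure Ω} {f : Ω → ℝ}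

lemma faInt_eq_lintegral_sub (m : FinAddMeasure Ω) (f : Ω → ℝ) :
    faInt m f = m.lintegral (fun ω => max (f ω) 0) - m.lintegral (fun ω => max (-f ω) 0) := rfl

lemma fAIntegrable_iff : FAIntegrable m f ↔
    BddAbove (m.sums fun ω => max (f ω) 0) ∧ BddAbove (m.sums fun ω => max (-f ω) 0) := Iff.rfl

lemma fAIntegrable_of_bddAbove_abs (hf : BddAbove (m.sums fun ω => |f ω|)) : FAIntegrable m f :=
  ⟨hf.mono (sums_mono fun ω => max_le (le_abs_self (f ω)) (abs_nonneg _)),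
    hf.mono (sums_mono fun ω => max_le (neg_le_abs (f ω)) (abs_nonneg _))⟩

lemma bddAbove_abs_of_fAIntegrable (hf : FAIntegrable m f) :
    BddAbove (m.sums fun ω => |f ω|) := by
  have : (fun ω => |f ω|) = (fun ω => max (f ω) 0) + fun ω => max (-f ω) 0 := by
    ext ω
    exact (max_zero_add_max_neg_zero_eq_abs_self _).symm
  rw [this]
  exact bddAbove_sums_add (fun _ => le_max_right _ _) (fun _ => le_max_right _ _) hf.1 hf.2

lemma fAIntegrable_abs_iff :
    FAIntegrable m (fun ω => |f ω|) ↔ BddAbove (m.sums fun ω => |f ω|) := by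
  refine ⟨fun h => ?_, fun h => fAIntegrable_of_bddAbove_abs ?_⟩
  · simpa using (fAIntegrable_iff.mp h).1
  · simpa using h

lemma faInt_abs : faInt m (fun ω => |f ω|) = m.lintegral fun ω => |f ω| := by
  have hpos : (fun ω => max |f ω| 0) = fun ω => |f ω| := by
    ext ω
    simp
  have hneg : (fun ω => max (-|f ω|) 0) = 0 := by
    ext ω
    simp
  rw [faInt_eq_lintegral_sub, hpos, hneg, lintegral_zero, sub_zero]

lemma faInt_zero_measure : faInt 0 f = 0 := by
  rw [faInt_eq_lintegral_sub, lintegral_zero_measure fun ω => le_max_right (f ω) 0,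
    lintegral_zero_measure fun ω => le_max_right (-f ω) 0, sub_zero]

lemma fAIntegrable_add_measure (hP : FAIntegrable P f) (hN : FAIntegrable N f) :
    FAIntegrable (P + N) f :=
  ⟨bddAbove_sums_add_measure hP.1 hN.1, bddAbove_sums_add_measure hP.2 hN.2⟩

theorem abs_faInt_sub_faInt_le (hP : FAIntegrable P f) (hN : FAIntegrable N f) :
    |faInt P f - faInt N f| ≤ 2 * faInt (P + N) fun ω => |f ω| := by
  have hb := bddAbove_abs_of_fAIntegrable (fAIntegrable_add_measure hP hN)
  have bound : ∀ Q : FinAddMeasure Ω, (∀ E, Q.μ E ≤ 1 * (P + N).μ E) → ∀ k : Ω → ℝ, 0 ≤ k →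
      k ≤ (fun ω => |f ω|) → 0 ≤ Q.lintegral k ∧ Q.lintegral k ≤ faInt (P + N) fun ω => |f ω| :=
    fun Q hQ k hk0 hk => by
      have hQb := bddAbove_sums_of_le_smul zero_le_one hQ hb
      refine ⟨lintegral_nonneg hk0 (hQb.mono (sums_mono hk)), ?_⟩
      rw [faInt_abs, ← one_mul ((P + N).lintegral _)]
      exact (lintegral_mono hk hk0 hQb).trans
        (lintegral_le_smul zero_le_one hQ (fun _ => abs_nonneg _) hb)
  have hPle : ∀ E, P.μ E ≤ 1 * (P + N).μ E := fun E => by simp [N.nonneg E]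
  have hNle : ∀ E, N.μ E ≤ 1 * (P + N).μ E := fun E => by simp [P.nonneg E]
  have hpos : ∀ ω, max (f ω) 0 ≤ |f ω| := fun ω => max_le (le_abs_self _) (abs_nonneg _)
  have hneg : ∀ ω, max (-f ω) 0 ≤ |f ω| := fun ω => max_le (neg_le_abs _) (abs_nonneg _)
  have h₁ := bound P hPle (fun ω => max (f ω) 0) (fun _ => le_max_right _ _) hpos
  have h₂ := bound P hPle (fun ω => max (-f ω) 0) (fun _ => le_max_right _ _) hneg
  have h₃ := bound N hNle (fun ω => max (f ω) 0) (fun _ => le_max_right _ _) hpos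
  have h₄ := bound N hNle (fun ω => max (-f ω) 0) (fun _ => le_max_right _ _) hneg
  rw [faInt_eq_lintegral_sub, faInt_eq_lintegral_sub, abs_le]
  constructor <;> linarith [h₁.1, h₁.2, h₂.1, h₂.2, h₃.1, h₃.2, h₄.1, h₄.2]

end faInt

namespace FinAddMeasure

variable {Ω : Type*} (μ : FinAddMeasure Ω)

/-- The space `L(μ)`; bounded lower sums of `|f|` amount to `FAIntegrable μ f`. -/
def L1 : Submodule ℝ (Ω → ℝ) where
  carrier := {f | BddAbove (μ.sums fun ω => |f ω|)}
  zero_mem' := bddAbove_sums_zero.mono (sums_mono fun ω => by simp)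
  add_mem' {f g} hf hg :=
    (bddAbove_sums_add (fun _ => abs_nonneg _) (fun _ => abs_nonneg _) hf hg).mono
      (sums_mono fun ω => abs_add_le (f ω) (g ω))
  smul_mem' c f hf :=
    ((bddAbove_sums_smul_iff (by positivity : 0 < |c| + 1)).mpr hf).mono (sums_mono fun ω => by
      simp only [Pi.smul_apply, smul_eq_mul, abs_mul]
      exact mul_le_mul_of_nonneg_right (le_add_of_nonneg_right zero_le_one) (abs_nonneg _))

variable {μ}

lemma mem_L1 {f : Ω → ℝ} : f ∈ μ.L1 ↔ BddAbove (μ.sums fun ω => |f ω|) := Iff.rfl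

lemma fAIntegrable_of_le_smul {P : FinAddMeasure Ω} {C : ℝ} (hC : 0 ≤ C)
    (hP : ∀ E, P.μ E ≤ C * μ.μ E) {f : Ω → ℝ} (hf : f ∈ μ.L1) : FAIntegrable P f :=
  fAIntegrable_of_bddAbove_abs (bddAbove_sums_of_le_smul hC hP hf)

section Sublinear

variable {q : ℝ → ℝ} (hq0 : ∀ t, 0 ≤ q t) (hq : ∀ t, q t ≤ |t|)
include hq0 hq

omit hq0 in
lemma bddAbove_sums_comp (x : μ.L1) : BddAbove (μ.sums (q ∘ x)) :=
  (mem_L1.mp x.2).mono (sums_mono fun _ => hq _)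

/-- With `q = |·|` the bound is the seminorm `C μ(|x|)`; with `q = max · 0` it is `C μ(x⁺)`. -/
theorem exists_extension_le_lintegral_comp (hq_add : ∀ s t, q (s + t) ≤ q s + q t)
    (hq_smul : ∀ c > 0, ∀ t, q (c * t) = c * q t) {C : ℝ} (hC : 0 ≤ C)
    (φ : μ.L1 →ₗ.[ℝ] ℝ) (hφ : ∀ x : φ.domain, φ x ≤ C * μ.lintegral (q ∘ (x : μ.L1))) :
    ∃ ψ : μ.L1 →ₗ[ℝ] ℝ, (∀ x : φ.domain, ψ x = φ x) ∧
      ∀ x, ψ x ≤ C * μ.lintegral (q ∘ x) := by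
  refine exists_extension_of_le_sublinear φ (fun x => C * μ.lintegral (q ∘ x)) (fun c hc x => ?_)
    (fun x y => ?_) hφ
  · have : q ∘ ((c • x : μ.L1) : Ω → ℝ) = c • (q ∘ x) := by
      ext ω
      exact hq_smul c hc _
    rw [this, lintegral_smul hc.le]
    ring
  · rw [← mul_add]
    refine mul_le_mul_of_nonneg_left (lintegral_le_add_of_le (fun _ => hq0 _) (fun _ => hq0 _)
      (fun _ => hq0 _) (bddAbove_sums_comp hq x) (bddAbove_sums_comp hq y)
      fun ω => hq_add _ _) hC

lemma abs_le_of_le_lintegral_comp {C : ℝ} {ψ : μ.L1 →ₗ[ℝ] ℝ}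
    (hψ : ∀ x, ψ x ≤ C * μ.lintegral (q ∘ x)) (hC : 0 ≤ C) (x : μ.L1) :
    |ψ x| ≤ C * μ.lintegral fun ω => |(x : Ω → ℝ) ω| := by
  have hle : ∀ y : μ.L1, q ∘ y ≤ (fun ω => |(x : Ω → ℝ) ω|) →
      ψ y ≤ C * μ.lintegral fun ω => |(x : Ω → ℝ) ω| :=
    fun y hy => (hψ y).trans (mul_le_mul_of_nonneg_left
      (lintegral_mono hy (fun _ => hq0 _) (mem_L1.mp x.2)) hC)
  have hneg := hle (-x) fun ω => by simpa using hq (-(x : Ω → ℝ) ω)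
  rw [map_neg] at hneg
  exact abs_le.mpr ⟨by linarith, hle x fun ω => hq _⟩

end Sublinear

lemma indicator_mem_L1 (E : Set Ω) : E.indicator (fun _ => (1 : ℝ)) ∈ μ.L1 :=
  bddAbove_sums_of_le_indicatorSum (b := fun _ : Unit => (1 : ℝ)) (fun _ => E) fun ω => by
    by_cases h : ω ∈ E <;> simp [indicatorSum, h]

variable (μ) in
noncomputable def indL1 (E : Set Ω) : μ.L1 := ⟨E.indicator fun _ => 1, indicator_mem_L1 E⟩

lemma indL1_union {E F : Set Ω} (h : Disjoint E F) :
    μ.indL1 (E ∪ F) = μ.indL1 E + μ.indL1 F :=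
  Subtype.ext (Set.indicator_union_of_disjoint h _)

lemma coe_sum_smul_indL1 {n : ℕ} (a : Fin n → ℝ) (E : Fin n → Set Ω) :
    ((∑ i, a i • μ.indL1 (E i) : μ.L1) : Ω → ℝ) = indicatorSum a E := by
  ext ω
  simp [indL1, indicatorSum]

lemma lintegral_abs_indL1 (E : Set Ω) :
    μ.lintegral (fun ω => |(μ.indL1 E : Ω → ℝ) ω|) = μ.μ E := by
  have : (fun ω => |(μ.indL1 E : Ω → ℝ) ω|) =
      indicatorSum (fun _ : Unit => (1 : ℝ)) (fun _ => E) := by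
    ext ω
    by_cases h : ω ∈ E <;> simp [indL1, indicatorSum, h]
  rw [this, lintegral_indicatorSum _ fun _ => zero_le_one]
  simp [elemInt]

lemma map_indL1_nonneg {C : ℝ} {ψ : μ.L1 →ₗ[ℝ] ℝ}
    (hψ : ∀ x, ψ x ≤ C * μ.lintegral ((fun t => max t 0) ∘ x)) (E : Set Ω) :
    0 ≤ ψ (μ.indL1 E) := by
  have hq : (fun t => max t 0) ∘ ((-μ.indL1 E : μ.L1) : Ω → ℝ) = 0 := by
    ext ω
    by_cases h : ω ∈ E <;> simp [indL1, h]
  have := hψ (-μ.indL1 E)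
  rw [hq, lintegral_zero, mul_zero, map_neg] at this
  linarith

/-- A finitely additive `ν` with `|ν| ≤ C μ` is the difference of `(C μ + ν) / 2` and
`(C μ - ν) / 2`. -/
theorem exists_sub_eq_of_abs_le {ν : Set Ω → ℝ}
    (hadd : ∀ E F, Disjoint E F → ν (E ∪ F) = ν E + ν F) {C : ℝ}
    (hν : ∀ E, |ν E| ≤ C * μ.μ E) :
    ∃ P N : FinAddMeasure Ω, (∀ E, P.μ E ≤ C * μ.μ E) ∧ (∀ E, N.μ E ≤ C * μ.μ E) ∧
      ∀ E, ν E = P.μ E - N.μ E := by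
  have hνC := fun E => abs_le.mp (hν E)
  refine ⟨ofAdditive (fun E => (C * μ.μ E + ν E) / 2) (fun E => by linarith [hνC E])
      (fun E F h => by simp only [μ.add E F h, hadd E F h]; ring),
    ofAdditive (fun E => (C * μ.μ E - ν E) / 2) (fun E => by linarith [hνC E])
      (fun E F h => by simp only [μ.add E F h, hadd E F h]; ring),
    fun E => ?_, fun E => ?_, fun E => ?_⟩ <;>
  simp only [ofAdditive_apply]
  · linarith [hνC E]
  · linarith [hνC E]
  · ring

/-- Both sides are linear, agree on indicators and are continuous for the seminorm `μ(|·|)`;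
simple functions approximate `f⁺` and `f⁻` from below in that seminorm. -/
theorem map_eq_faInt_sub_faInt {P N : FinAddMeasure Ω} {C : ℝ} (hC : 0 ≤ C)
    (hP : ∀ E, P.μ E ≤ C * μ.μ E) (hN : ∀ E, N.μ E ≤ C * μ.μ E) {ψ : μ.L1 →ₗ[ℝ] ℝ}
    (hψ : ∀ x, |ψ x| ≤ C * μ.lintegral fun ω => |(x : Ω → ℝ) ω|)
    (hψind : ∀ E, ψ (μ.indL1 E) = P.μ E - N.μ E) {f : Ω → ℝ} (hf : f ∈ μ.L1) :
    ψ ⟨f, hf⟩ = faInt P f - faInt N f := by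
  obtain ⟨hgb, hhb⟩ := fAIntegrable_of_bddAbove_abs (mem_L1.mp hf)
  have hsimple : ∀ {n : ℕ} (a : Fin n → ℝ) (E : Fin n → Set Ω),
      ψ (∑ i, a i • μ.indL1 (E i)) = P.elemInt a E - N.elemInt a E := fun a E => by
    simp [hψind, elemInt, mul_sub]
  refine eq_of_forall_dist_le fun δ hδ => ?_
  set ε := δ / (4 * C + 1)
  have hε : 0 < ε := by positivity
  have hCε : 4 * C * ε ≤ δ := by
    have : ε * (4 * C + 1) = δ := div_mul_cancel₀ δ (by positivity)
    nlinarith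
  have approx : ∀ Q : FinAddMeasure Ω, (∀ E, Q.μ E ≤ C * μ.μ E) → ∀ {k : Ω → ℝ} {n : ℕ}
      {a : Fin n → ℝ} {E : Fin n → Set Ω}, BddAbove (μ.sums k) → 0 ≤ a →
      indicatorSum a E ≤ k → μ.lintegral (k - indicatorSum a E) ≤ ε →
      Q.elemInt a E ≤ Q.lintegral k ∧ Q.lintegral k ≤ Q.elemInt a E + C * ε :=
    fun Q hQ k n a E hb ha hs hsε =>
      ⟨le_lintegral (bddAbove_sums_of_le_smul hC hQ hb) (elemInt_mem_sums ha hs),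
        (lintegral_le_elemInt_add hC hQ hb ha hs).trans
          (add_le_add le_rfl (mul_le_mul_of_nonneg_left hsε hC))⟩
  obtain ⟨n, a, E, ha, hs, hsε⟩ :=
    exists_lintegral_sub_le (fun ω => le_max_right (f ω) 0) hgb hε
  obtain ⟨n', b, F, hb, ht, htε⟩ :=
    exists_lintegral_sub_le (fun ω => le_max_right (-f ω) 0) hhb hε
  set y := ∑ i, a i • μ.indL1 (E i) - ∑ j, b j • μ.indL1 (F j)
  have hy : ψ y = P.elemInt a E - N.elemInt a E - (P.elemInt b F - N.elemInt b F) := by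
    rw [map_sub, hsimple, hsimple]
  have hxy : |ψ (⟨f, hf⟩ - y)| ≤ C * (2 * ε) := by
    refine (hψ _).trans (mul_le_mul_of_nonneg_left ?_ hC)
    have hs' := sub_nonneg.mpr hs
    have ht' := sub_nonneg.mpr ht
    refine (lintegral_le_add_of_le (fun _ => abs_nonneg _) hs' ht'
      (hgb.mono (sums_mono (sub_le_self _ (indicatorSum_nonneg ha E))))
      (hhb.mono (sums_mono (sub_le_self _ (indicatorSum_nonneg hb F)))) fun ω => ?_).trans
      (by linarith)
    have hfω := max_zero_sub_max_neg_zero_eq_self (f ω)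
    have hsω := hs' ω
    have htω := ht' ω
    simp only [y, Submodule.coe_sub, coe_sum_smul_indL1, Pi.sub_apply, Pi.add_apply,
      Pi.zero_apply] at hsω htω ⊢
    rw [abs_le]
    constructor <;> linarith
  obtain ⟨hPg, hPg'⟩ := approx P hP hgb ha hs hsε
  obtain ⟨hPh, hPh'⟩ := approx P hP hhb hb ht htε
  obtain ⟨hNg, hNg'⟩ := approx N hN hgb ha hs hsε
  obtain ⟨hNh, hNh'⟩ := approx N hN hhb hb ht htε
  obtain ⟨hxy₁, hxy₂⟩ := abs_le.mp hxy
  rw [map_sub, hy] at hxy₁ hxy₂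
  rw [Real.dist_eq, faInt_eq_lintegral_sub, faInt_eq_lintegral_sub, abs_le]
  constructor <;> linarith

variable (μ) {L : Set (Ω → ℝ)} (h0 : (0 : Ω → ℝ) ∈ L) (hLadd : ∀ f ∈ L, ∀ g ∈ L, f + g ∈ L)
  (hLsmul : ∀ (c : ℝ), ∀ f ∈ L, c • f ∈ L) {φ : (Ω → ℝ) → ℝ}
  (hφadd : ∀ f ∈ L, ∀ g ∈ L, φ (f + g) = φ f + φ g)
  (hφsmul : ∀ (c : ℝ), ∀ f ∈ L, φ (c • f) = c * φ f)

def linearPMapOn : μ.L1 →ₗ.[ℝ] ℝ where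
  domain :=
    { carrier := {x | (x : Ω → ℝ) ∈ L}
      add_mem' := fun hx hy => hLadd _ hx _ hy
      zero_mem' := h0
      smul_mem' := fun c _ hx => hLsmul c _ hx }
  toFun :=
    { toFun := fun x => φ x.1
      map_add' := fun x y => hφadd _ x.2 _ y.2
      map_smul' := fun c x => hφsmul c _ x.2 }

end FinAddMeasure

section Representation

open FinAddMeasure

variable {Ω : Type*} {L : Set (Ω → ℝ)} {φ : (Ω → ℝ) → ℝ}

lemma zero_mem_of_smul_mem (hL : L.Nonempty) (hLsmul : ∀ (c : ℝ), ∀ f ∈ L, c • f ∈ L) :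
    (0 : Ω → ℝ) ∈ L :=
  let ⟨f, hf⟩ := hL
  zero_smul ℝ f ▸ hLsmul 0 f hf

theorem exists_bound_of_signed_representation {P N : FinAddMeasure Ω}
    (h : ∀ f ∈ L, FAIntegrable P f ∧ FAIntegrable N f ∧ φ f = faInt P f - faInt N f) :
    (∀ f ∈ L, FAIntegrable (P + N) f ∧ FAIntegrable (P + N) (fun ω => |f ω|)) ∧
      ∀ f ∈ L, |φ f| ≤ 2 * faInt (P + N) (fun ω => |f ω|) := by
  refine ⟨fun f hf => ?_, fun f hf => ?_⟩
  · obtain ⟨hP, hN, -⟩ := h f hf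
    have := fAIntegrable_add_measure hP hN
    exact ⟨this, fAIntegrable_abs_iff.mpr (bddAbove_abs_of_fAIntegrable this)⟩
  · obtain ⟨hP, hN, hφ⟩ := h f hf
    exact hφ ▸ abs_faInt_sub_faInt_le hP hN

/-- `φ f ≤ φ f + φ f⁻ = φ f⁺ ≤ C μ(f⁺)`. -/
lemma le_mul_lintegral_max_of_pos (hLsmul : ∀ (c : ℝ), ∀ f ∈ L, c • f ∈ L)
    (hφadd : ∀ f ∈ L, ∀ g ∈ L, φ (f + g) = φ f + φ g) (h0 : (0 : Ω → ℝ) ∈ L)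
    (hlat : ∀ f ∈ L, ∀ g ∈ L, (fun ω => max (f ω) (g ω)) ∈ L)
    (hpos : ∀ f ∈ L, (∀ ω, 0 ≤ f ω) → 0 ≤ φ f) {μ : FinAddMeasure Ω} {C : ℝ}
    (hφ : ∀ f ∈ L, |φ f| ≤ C * faInt μ (fun ω => |f ω|)) {f : Ω → ℝ} (hf : f ∈ L) :
    φ f ≤ C * μ.lintegral (fun ω => max (f ω) 0) := by
  have hp : (fun ω => max (f ω) 0) ∈ L := hlat f hf 0 h0
  have hn : (fun ω => max (-f ω) 0) ∈ L := by simpa using hlat _ (hLsmul (-1) f hf) 0 h0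
  have hsplit : (fun ω => max (f ω) 0) = f + fun ω => max (-f ω) 0 := by
    ext ω
    simp only [Pi.add_apply]
    linarith [max_zero_sub_max_neg_zero_eq_self (f ω)]
  have habs : (fun ω => |max (f ω) 0|) = fun ω => max (f ω) 0 := by
    ext ω
    exact abs_of_nonneg (le_max_right _ _)
  have hφp := hφ _ hp
  rw [faInt_abs, habs] at hφp
  have hφn := hpos _ hn fun ω => le_max_right _ _
  have hφf := hφadd _ hf _ hn
  rw [← hsplit] at hφf
  linarith [le_abs_self (φ fun ω => max (f ω) 0)]

section

variable (hLadd : ∀ f ∈ L, ∀ g ∈ L, f + g ∈ L) (hLsmul : ∀ (c : ℝ), ∀ f ∈ L, c • f ∈ L)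
  (hφadd : ∀ f ∈ L, ∀ g ∈ L, φ (f + g) = φ f + φ g)
  (hφsmul : ∀ (c : ℝ), ∀ f ∈ L, φ (c • f) = c * φ f)
  {μ : FinAddMeasure Ω} (hLμ : ∀ f ∈ L, FAIntegrable μ (fun ω => |f ω|)) {C : ℝ} (hC : 0 ≤ C)
include hLadd hLsmul hφadd hφsmul hLμ hC

theorem exists_signed_representation_of_bound
    (hφ : ∀ f ∈ L, |φ f| ≤ C * faInt μ (fun ω => |f ω|)) :
    ∃ P N : FinAddMeasure Ω, ∀ f ∈ L,
      FAIntegrable P f ∧ FAIntegrable N f ∧ φ f = faInt P f - faInt N f := by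
  rcases L.eq_empty_or_nonempty with rfl | hL
  · exact ⟨μ, μ, by simp⟩
  have hL1 : ∀ f ∈ L, f ∈ μ.L1 := fun f hf => fAIntegrable_abs_iff.mp (hLμ f hf)
  obtain ⟨ψ, hψφ, hψ⟩ := exists_extension_le_lintegral_comp (q := abs) abs_nonneg (fun _ => le_rfl)
    abs_add_le (fun c hc t => by simp [abs_mul, abs_of_pos hc]) hC
    (linearPMapOn μ (zero_mem_of_smul_mem hL hLsmul) hLadd hLsmul hφadd hφsmul)
    fun x => (le_abs_self _).trans ((hφ _ x.2).trans_eq (by rw [faInt_abs]; rfl))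
  have hψabs := abs_le_of_le_lintegral_comp abs_nonneg (fun _ => le_rfl) hψ hC
  obtain ⟨P, N, hP, hN, hPN⟩ := exists_sub_eq_of_abs_le (ν := fun E => ψ (μ.indL1 E))
    (fun E F h => by simp only [indL1_union h, map_add])
    fun E => (hψabs _).trans_eq (by rw [lintegral_abs_indL1])
  refine ⟨P, N, fun f hf => ⟨fAIntegrable_of_le_smul hC hP (hL1 f hf),
    fAIntegrable_of_le_smul hC hN (hL1 f hf), ?_⟩⟩
  rw [← map_eq_faInt_sub_faInt hC hP hN hψabs hPN (hL1 f hf)]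
  exact (hψφ ⟨⟨f, hL1 f hf⟩, hf⟩).symm

theorem exists_representation_of_bound_of_pos
    (hlat : ∀ f ∈ L, ∀ g ∈ L, (fun ω => max (f ω) (g ω)) ∈ L)
    (hpos : ∀ f ∈ L, (∀ ω, 0 ≤ f ω) → 0 ≤ φ f)
    (hφ : ∀ f ∈ L, |φ f| ≤ C * faInt μ (fun ω => |f ω|)) :
    ∃ m : FinAddMeasure Ω, ∀ f ∈ L, FAIntegrable m f ∧ φ f = faInt m f := by
  rcases L.eq_empty_or_nonempty with rfl | hL
  · exact ⟨μ, by simp⟩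
  have h0 := zero_mem_of_smul_mem hL hLsmul
  have hL1 : ∀ f ∈ L, f ∈ μ.L1 := fun f hf => fAIntegrable_abs_iff.mp (hLμ f hf)
  obtain ⟨ψ, hψφ, hψ⟩ := exists_extension_le_lintegral_comp (q := fun t => max t 0)
    (fun t => le_max_right t 0) (fun t => max_le (le_abs_self t) (abs_nonneg t))
    (fun s t => max_le (add_le_add (le_max_left _ _) (le_max_left _ _))
      (add_nonneg (le_max_right _ _) (le_max_right _ _)))
    (fun c hc t => by rw [mul_max_of_nonneg _ _ hc.le, mul_zero]) hC
    (linearPMapOn μ h0 hLadd hLsmul hφadd hφsmul)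
    fun x => le_mul_lintegral_max_of_pos hLsmul hφadd h0 hlat hpos hφ x.2
  have hψabs := abs_le_of_le_lintegral_comp (fun t => le_max_right t 0)
    (fun t => max_le (le_abs_self t) (abs_nonneg t)) hψ hC
  let m := ofAdditive (fun E => ψ (μ.indL1 E)) (map_indL1_nonneg hψ)
    fun E F h => by simp only [indL1_union h, map_add]
  have hm : ∀ E, m.μ E ≤ C * μ.μ E := fun E =>
    (le_abs_self _).trans ((hψabs _).trans_eq (by rw [lintegral_abs_indL1]))
  refine ⟨m, fun f hf => ⟨fAIntegrable_of_le_smul hC hm (hL1 f hf), ?_⟩⟩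
  rw [← sub_zero (faInt m f), ← faInt_zero_measure (f := f),
    ← map_eq_faInt_sub_faInt hC hm (fun E => by simpa using mul_nonneg hC (μ.nonneg E)) hψabs
      (fun E => by simp [m]) (hL1 f hf)]
  exact (hψφ ⟨⟨f, hL1 f hf⟩, hf⟩).symm

end

end Representation

theorem representing_measure_iff_continuity_general {Ω : Type*}
    (L : Set (Ω → ℝ))
    (hLadd : ∀ f ∈ L, ∀ g ∈ L, f + g ∈ L)
    (hLsmul : ∀ (c : ℝ), ∀ f ∈ L, c • f ∈ L)
    (φ : (Ω → ℝ) → ℝ)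
    (hφadd : ∀ f ∈ L, ∀ g ∈ L, φ (f + g) = φ f + φ g)
    (hφsmul : ∀ (c : ℝ), ∀ f ∈ L, φ (c • f) = c * φ f) :
    ((∃ lamP lamN : FinAddMeasure Ω, ∀ f ∈ L,
        FAIntegrable lamP f ∧ FAIntegrable lamN f ∧
        φ f = faInt lamP f - faInt lamN f) ↔
      (∃ μ : FinAddMeasure Ω,
        (∀ f ∈ L, FAIntegrable μ f ∧ FAIntegrable μ (fun ω => |f ω|)) ∧
        ∃ C : ℝ, 0 ≤ C ∧ ∀ f ∈ L, |φ f| ≤ C * faInt μ (fun ω => |f ω|))) ∧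
    (((∀ f ∈ L, ∀ g ∈ L, (fun ω => max (f ω) (g ω)) ∈ L) ∧
        (∀ f ∈ L, (∀ ω, 0 ≤ f ω) → 0 ≤ φ f)) →
      (∃ μ : FinAddMeasure Ω,
        (∀ f ∈ L, FAIntegrable μ f ∧ FAIntegrable μ (fun ω => |f ω|)) ∧
        ∃ C : ℝ, 0 ≤ C ∧ ∀ f ∈ L, |φ f| ≤ C * faInt μ (fun ω => |f ω|)) →
      ∃ m : FinAddMeasure Ω, ∀ f ∈ L, FAIntegrable m f ∧ φ f = faInt m f) := by
  refine ⟨⟨fun ⟨P, N, h⟩ => ?_, fun ⟨μ, hint, C, hC, hφ⟩ => ?_⟩,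
    fun ⟨hlat, hpos⟩ ⟨μ, hint, C, hC, hφ⟩ => ?_⟩
  · obtain ⟨hint, hbound⟩ := exists_bound_of_signed_representation h
    exact ⟨P + N, hint, 2, zero_le_two, hbound⟩
  · exact exists_signed_representation_of_bound hLadd hLsmul hφadd hφsmul
      (fun f hf => (hint f hf).2) hC hφ
  · exact exists_representation_of_bound_of_pos hLadd hLsmul hφadd hφsmul
      (fun f hf => (hint f hf).2) hC hlat hpos hφ

/-- a linear functional `φ` on a linear subspace `L ⊆ ℝ^Ω`
admits a representing measure `λ ∈ ba` (written as a difference `λ⁺ - λ⁻` of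
positive finitely additive measures) iff there is `μ ∈ ba₊` with `L ⊆ L(μ)`
and `φ` continuous for the seminorm `f ↦ μ(|f|)`.  Moreover, if `L` is a
vector sublattice and `φ` is positive, the representing measure may be
chosen positive. -/
theorem representing_measure_iff_continuity {Ω : Type*} [Nonempty Ω]
    (L : Set (Ω → ℝ))
    (hLadd : ∀ f ∈ L, ∀ g ∈ L, f + g ∈ L)
    (hLsmul : ∀ (c : ℝ), ∀ f ∈ L, c • f ∈ L)
    (φ : (Ω → ℝ) → ℝ)
    (hφadd : ∀ f ∈ L, ∀ g ∈ L, φ (f + g) = φ f + φ g)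
    (hφsmul : ∀ (c : ℝ), ∀ f ∈ L, φ (c • f) = c * φ f) :
    ((∃ lamP lamN : FinAddMeasure Ω, ∀ f ∈ L,
        FAIntegrable lamP f ∧ FAIntegrable lamN f ∧
        φ f = faInt lamP f - faInt lamN f) ↔
      (∃ μ : FinAddMeasure Ω,
        (∀ f ∈ L, FAIntegrable μ f ∧ FAIntegrable μ (fun ω => |f ω|)) ∧
        ∃ C : ℝ, 0 ≤ C ∧ ∀ f ∈ L, |φ f| ≤ C * faInt μ (fun ω => |f ω|))) ∧
    (((∀ f ∈ L, ∀ g ∈ L, (fun ω => max (f ω) (g ω)) ∈ L) ∧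
        (∀ f ∈ L, (∀ ω, 0 ≤ f ω) → 0 ≤ φ f)) →
      (∃ μ : FinAddMeasure Ω,
        (∀ f ∈ L, FAIntegrable μ f ∧ FAIntegrable μ (fun ω => |f ω|)) ∧
        ∃ C : ℝ, 0 ≤ C ∧ ∀ f ∈ L, |φ f| ≤ C * faInt μ (fun ω => |f ω|)) →
      ∃ m : FinAddMeasure Ω, ∀ f ∈ L, FAIntegrable m f ∧ φ f = faInt m f) :=
  representing_measure_iff_continuity_general L hLadd hLsmul φ hφadd hφsmul
end
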